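/- Fix β > 0, R > 0, |x| > 0, |y| ≥ 0 with |x|² − |y|² = 2β, and let λ(r) = 2β r^{2Rβ}/(|x|² − |y|² r^{4Rβ}) on (0,1]. Treating λ as a function of z ∈ ℂ with r = |z|, one has ∂_z log λ = Rβ · (|x|² + |y|² r^{4Rβ})/(|x|² − |y|² r^{4Rβ}) · (1/z), and consequently ∂̄∂ log λ = R² λ² |x|² |y|² r^{−2} dz̄ ∧ dz. In particular log λ satisfies the scalar Hitchin equation ∂̄∂ log λ = R² λ² |φ|² r^{−2} dz̄∧dz with |φ|² = |x|²|y|². -/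

import Mathlib

/-- The Wirtinger derivative `∂_z f = (∂_x f − i ∂_y f)/2`. -/
noncomputable def dZ (f : ℂ → ℂ) (z : ℂ) : ℂ :=
  (fderiv ℝ f z 1 - Complex.I * fderiv ℝ f z Complex.I) / 2

/-- The Wirtinger derivative `∂_z̄ f = (∂_x f + i ∂_y f)/2`. -/
noncomputable def dZbar (f : ℂ → ℂ) (z : ℂ) : ℂ :=
  (fderiv ℝ f z 1 + Complex.I * fderiv ℝ f z Complex.I) / 2

noncomputable def dNmap (z : ℂ) : ℂ →L[ℝ] ℝ :=
  (2*z.re) • Complex.reCLM + (2*z.im) • Complex.imCLM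

lemma hasFDerivAt_normSq' (z : ℂ) : HasFDerivAt Complex.normSq (dNmap z) z := by
  have hre : HasFDerivAt (fun w : ℂ => w.re) (Complex.reCLM : ℂ →L[ℝ] ℝ) z :=
    Complex.reCLM.hasFDerivAt
  have him : HasFDerivAt (fun w : ℂ => w.im) (Complex.imCLM : ℂ →L[ℝ] ℝ) z :=
    Complex.imCLM.hasFDerivAt
  have hh := (hre.mul hre).add (him.mul him)
  have heq : Complex.normSq = fun w : ℂ => w.re * w.re + w.im * w.im := by
    funext w; simp [Complex.normSq_apply]
  rw [heq]
  refine hh.congr_fderiv ?_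
  ext v <;> (simp [dNmap] <;> ring)

lemma hasFDerivAt_radial {g : ℝ → ℝ} {g' : ℝ} {z : ℂ}
    (hg : HasDerivAt g g' (Complex.normSq z)) :
    HasFDerivAt (fun w => ((g (Complex.normSq w) : ℝ) : ℂ))
      (Complex.ofRealCLM.comp (g' • dNmap z)) z :=
  Complex.ofRealCLM.hasFDerivAt.comp z (hg.comp_hasFDerivAt z (hasFDerivAt_normSq' z))

lemma dZ_radial {g : ℝ → ℝ} {g' : ℝ} {z : ℂ}
    (hg : HasDerivAt g g' (Complex.normSq z)) :
    dZ (fun w => ((g (Complex.normSq w) : ℝ) : ℂ)) z = (g' : ℂ) * (starRingEnd ℂ z) := by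
  rw [dZ, (hasFDerivAt_radial hg).fderiv]
  simp [dNmap, Complex.ext_iff]
  constructor <;> ring

lemma dZbar_radial_mul_conj {c : ℝ → ℝ} {c' : ℝ} {z : ℂ}
    (hc : HasDerivAt c c' (Complex.normSq z)) :
    dZbar (fun w => ((c (Complex.normSq w) : ℝ) : ℂ) * (starRingEnd ℂ w)) z
      = ((c (Complex.normSq z) + c' * Complex.normSq z : ℝ) : ℂ) := by
  have h1 : HasFDerivAt (fun w => ((c (Complex.normSq w) : ℝ) : ℂ))
      (Complex.ofRealCLM.comp (c' • dNmap z)) z := hasFDerivAt_radial hc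
  have h2 : HasFDerivAt (fun w : ℂ => (starRingEnd ℂ w))
      (Complex.conjCLE : ℂ →L[ℝ] ℂ) z := Complex.conjCLE.hasFDerivAt
  have h3 : HasFDerivAt (fun w => ((c (Complex.normSq w) : ℝ) : ℂ) * (starRingEnd ℂ w)) _ z :=
    h1.mul h2
  rw [dZbar, h3.fderiv]
  simp [dNmap, Complex.ext_iff, Complex.normSq_apply]
  constructor <;> ring

/-- For `λ(r) = 2β r^{2Rβ}/(|x|² − |y|² r^{4Rβ})` with `|x|² − |y|² = 2β`,
one has `∂_z log λ = Rβ (|x|² + |y|² r^{4Rβ})/(|x|² − |y|² r^{4Rβ}) · (1/z)` and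
`∂_z̄ ∂_z log λ = R² λ² |x|²|y|² r^{-2}`, i.e. the scalar Hitchin equation with
`|φ|² = |x|²|y|²`. -/
theorem stmt7 (β R nx ny : ℝ) (hβ : 0 < β) (hR : 0 < R) (hnx : 0 < nx)
    (hny : 0 ≤ ny) (h : nx ^ 2 - ny ^ 2 = 2 * β)
    (lam : ℝ → ℝ)
    (hlam : ∀ r : ℝ, lam r = 2 * β * r ^ (2 * R * β) / (nx ^ 2 - ny ^ 2 * r ^ (4 * R * β)))
    (L : ℂ → ℂ) (hL : ∀ w : ℂ, L w = ((Real.log (lam (‖w‖)) : ℝ) : ℂ))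
    (z : ℂ) (hz : 0 < ‖z‖) (hz1 : ‖z‖ < 1) :
    dZ L z = ((R * β * ((nx ^ 2 + ny ^ 2 * (‖z‖) ^ (4 * R * β)) /
        (nx ^ 2 - ny ^ 2 * (‖z‖) ^ (4 * R * β))) : ℝ) : ℂ) / z ∧
    dZbar (fun w => dZ L w) z =
      ((R ^ 2 * (lam (‖z‖)) ^ 2 * nx ^ 2 * ny ^ 2 / (‖z‖) ^ 2 : ℝ) : ℂ) := by
  have hq : (0:ℝ) < 2 * R * β := by positivity
  -- rpow conversion from |w| to normSq w
  have habs : ∀ (w : ℂ), 0 < ‖w‖ → ∀ a : ℝ,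
      ‖w‖ ^ a = (Complex.normSq w) ^ (a/2) := by
    intro w hw a
    have hns : (0:ℝ) ≤ Complex.normSq w := Complex.normSq_nonneg w
    rw [Complex.norm_def, Real.sqrt_eq_rpow, ← Real.rpow_mul hns]
    ring_nf
  -- denominator positivity
  have hden : ∀ u : ℝ, 0 < u → u < 1 → 0 < nx ^ 2 - ny ^ 2 * u ^ (2*R*β) := by
    intro u hu hu1
    have h1 : u ^ (2*R*β) ≤ 1 := Real.rpow_le_one hu.le hu1.le hq.le
    have h2 : 0 < u ^ (2*R*β) := Real.rpow_pos_of_pos hu _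
    nlinarith [sq_nonneg ny]
  -- the radial log-lambda function in the variable u = normSq w
  set G : ℝ → ℝ := fun u => Real.log (2*β) + (R*β) * Real.log u
      - Real.log (nx ^ 2 - ny ^ 2 * u ^ (2*R*β)) with hG_def
  set c : ℝ → ℝ := fun u => R*β/u
      + ny ^ 2 * (2*R*β) * u ^ (2*R*β - 1) / (nx ^ 2 - ny ^ 2 * u ^ (2*R*β)) with hc_def
  -- L agrees with G ∘ normSq on the punctured unit disc
  have hLF : ∀ w : ℂ, 0 < ‖w‖ → ‖w‖ < 1 →
      L w = ((G (Complex.normSq w) : ℝ) : ℂ) := by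
    intro w hw hw1
    have hu : 0 < Complex.normSq w := by
      rw [← Complex.sq_norm]; positivity
    have hu1 : Complex.normSq w < 1 := by
      rw [← Complex.sq_norm]; nlinarith
    have e1 : ‖w‖ ^ (2*R*β) = Complex.normSq w ^ (R*β) := by
      rw [habs w hw]; ring_nf
    have e2 : ‖w‖ ^ (4*R*β) = Complex.normSq w ^ (2*R*β) := by
      rw [habs w hw]; ring_nf
    have hdw := hden _ hu hu1
    have hnum : (0:ℝ) < 2*β * Complex.normSq w ^ (R*β) := by
      have := Real.rpow_pos_of_pos hu (R*β); positivity
    rw [hL, hlam, e1, e2, hG_def]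
    congr 1
    rw [Real.log_div hnum.ne' hdw.ne', Real.log_mul (by positivity) (Real.rpow_pos_of_pos hu (R*β)).ne',
      Real.log_rpow hu]
  -- derivative of G
  have hGderiv : ∀ u : ℝ, 0 < u → u < 1 → HasDerivAt G (c u) u := by
    intro u hu hu1
    have hdu := hden u hu hu1
    have h1 : HasDerivAt (fun v : ℝ => R*β * Real.log v) (R*β * u⁻¹) u :=
      (Real.hasDerivAt_log hu.ne').const_mul (R*β)
    have h2 : HasDerivAt (fun v : ℝ => nx ^ 2 - ny ^ 2 * v ^ (2*R*β))
        (0 - ny ^ 2 * ((2*R*β) * u ^ (2*R*β - 1))) u :=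
      (hasDerivAt_const u (nx ^ 2)).sub
        ((Real.hasDerivAt_rpow_const (Or.inl hu.ne')).const_mul (ny ^ 2))
    have h3 := h2.log hdu.ne'
    have h4 := ((hasDerivAt_const u (Real.log (2*β))).add h1).sub h3
    refine h4.congr_deriv ?_
    simp only [hc_def]; ring
  set t := Complex.normSq z with ht_def
  have hzne : z ≠ 0 := by
    intro hzz; rw [hzz] at hz; simp at hz
  have ht0 : 0 < t := Complex.normSq_pos.mpr hzne
  have ht1 : t < 1 := by
    rw [ht_def, ← Complex.sq_norm]; nlinarith
  have hdent := hden t ht0 ht1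
  -- the open set where things agree
  have hSopen : IsOpen ((fun w : ℂ => ‖w‖) ⁻¹' Set.Ioo 0 1) := isOpen_Ioo.preimage continuous_norm
  have hfd : ∀ w : ℂ, 0 < ‖w‖ → ‖w‖ < 1 →
      dZ L w = ((c (Complex.normSq w) : ℝ) : ℂ) * (starRingEnd ℂ w) := by
    intro w hw hw1
    have hu : 0 < Complex.normSq w := by rw [← Complex.sq_norm]; positivity
    have hu1 : Complex.normSq w < 1 := by rw [← Complex.sq_norm]; nlinarith
    have hev : L =ᶠ[nhds w] (fun v => ((G (Complex.normSq v) : ℝ) : ℂ)) := by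
      filter_upwards [hSopen.mem_nhds (by exact ⟨hw, hw1⟩)] with v hv
      exact hLF v hv.1 hv.2
    have : fderiv ℝ L w = fderiv ℝ (fun v => ((G (Complex.normSq v) : ℝ) : ℂ)) w :=
      hev.fderiv_eq
    rw [dZ, this, ← dZ]
    exact dZ_radial (hGderiv _ hu hu1)
  have e2z : ‖z‖ ^ (4*R*β) = t ^ (2*R*β) := by
    rw [habs z hz, ← ht_def]; ring_nf
  -- Part 1
  have part1 : dZ L z = ((R * β * ((nx ^ 2 + ny ^ 2 * (‖z‖) ^ (4 * R * β)) /
      (nx ^ 2 - ny ^ 2 * (‖z‖) ^ (4 * R * β))) : ℝ) : ℂ) / z := by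
    rw [hfd z hz hz1, ← ht_def, eq_div_iff hzne, mul_assoc]
    have : (starRingEnd ℂ) z * z = ((t:ℝ):ℂ) := by
      rw [mul_comm, Complex.mul_conj]
    rw [this, ← Complex.ofReal_mul]
    congr 1
    rw [e2z, hc_def]
    have e3 : t ^ (2*R*β - 1) = t ^ (2*R*β) / t := by
      rw [Real.rpow_sub ht0, Real.rpow_one]
    simp only [e3]
    field_simp [(show nx ^ 2 - ny ^ 2 * t ^ (R*β*2) ≠ 0 by rw [show R*β*2 = 2*R*β by ring]; exact hdent.ne')]
    ring
  refine ⟨part1, ?_⟩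
  -- Part 2
  have hev2 : (fun w => dZ L w) =ᶠ[nhds z]
      (fun w => ((c (Complex.normSq w) : ℝ) : ℂ) * (starRingEnd ℂ w)) := by
    filter_upwards [hSopen.mem_nhds (by exact ⟨hz, hz1⟩)] with v hv
    exact hfd v hv.1 hv.2
  have hfder : fderiv ℝ (fun w => dZ L w) z =
      fderiv ℝ (fun w => ((c (Complex.normSq w) : ℝ) : ℂ) * (starRingEnd ℂ w)) z :=
    hev2.fderiv_eq
  rw [dZbar, hfder, ← dZbar]
  -- derivative of c at t
  have h1 : HasDerivAt (fun u : ℝ => R*β/u) (R*β * (-(t^2)⁻¹)) t := by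
    have := (hasDerivAt_inv ht0.ne').const_mul (R*β)
    simpa [div_eq_mul_inv] using this
  have h2 : HasDerivAt (fun u : ℝ => ny ^ 2 * (2*R*β) * u ^ (2*R*β - 1))
      (ny ^ 2 * (2*R*β) * ((2*R*β - 1) * t ^ (2*R*β - 1 - 1))) t :=
    (Real.hasDerivAt_rpow_const (Or.inl ht0.ne')).const_mul (ny ^ 2 * (2*R*β))
  have h3 : HasDerivAt (fun u : ℝ => nx ^ 2 - ny ^ 2 * u ^ (2*R*β))
      (0 - ny ^ 2 * ((2*R*β) * t ^ (2*R*β - 1))) t :=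
    (hasDerivAt_const t (nx ^ 2)).sub
      ((Real.hasDerivAt_rpow_const (Or.inl ht0.ne')).const_mul (ny ^ 2))
  have hc' : HasDerivAt c
      (R*β * (-(t^2)⁻¹) +
        (ny ^ 2 * (2*R*β) * ((2*R*β - 1) * t ^ (2*R*β - 1 - 1)) * (nx ^ 2 - ny ^ 2 * t ^ (2*R*β))
          - ny ^ 2 * (2*R*β) * t ^ (2*R*β - 1) * (0 - ny ^ 2 * ((2*R*β) * t ^ (2*R*β - 1))))
          / (nx ^ 2 - ny ^ 2 * t ^ (2*R*β)) ^ 2) t := by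
    exact h1.add (h2.div h3 hdent.ne')
  rw [dZbar_radial_mul_conj hc']
  congr 1
  -- final real identity
  have e1z : ‖z‖ ^ (2*R*β) = t ^ (R*β) := by
    rw [habs z hz, ← ht_def]; ring_nf
  have habs2 : (‖z‖) ^ (2:ℕ) = t := Complex.sq_norm z
  rw [hlam, e1z, e2z, habs2, ← ht_def, hc_def]
  have e3 : t ^ (2*R*β - 1) = t ^ (2*R*β) / t := by
    rw [Real.rpow_sub ht0, Real.rpow_one]
  have e4 : t ^ (2*R*β - 1 - 1) = t ^ (2*R*β) / t / t := by
    rw [Real.rpow_sub ht0, Real.rpow_sub ht0, Real.rpow_one]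
  have e5 : (t ^ (R*β)) ^ (2:ℕ) = t ^ (2*R*β) := by
    rw [← Real.rpow_natCast (t ^ (R*β)) 2, ← Real.rpow_mul ht0.le]
    norm_num; ring_nf
  simp only [e3, e4]
  rw [div_pow, mul_pow, e5]
  field_simp [(show nx ^ 2 - ny ^ 2 * t ^ (R*β*2) ≠ 0 by rw [show R*β*2 = 2*R*β by ring]; exact hdent.ne'), ht0.ne']
  ring
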